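/- arXiv:2411.03026 — 4 statements merged into one kernel-verified Lean document; each statement's English description precedes it below -/
import Mathlib

section
/- For every intervention σ and every index ℓ ∈ {1,…,n}, the pass-throughs to the price and quantity of the eigenvector bundle u^ℓ satisfy u^ℓ·ṗ = −(1/(1 + |λ_ℓ|))·(u^ℓ·σ) and u^ℓ·q̇ = λ_ℓ·(u^ℓ·ṗ) = (|λ_ℓ|/(1 + |λ_ℓ|))·(u^ℓ·σ). -/
noncomputable section
open Matrix MeasureTheory Filter

/-- Vectors in `ℝⁿ` with the Euclidean norm/inner product. -/
abbrev Vec (n : ℕ) := EuclideanSpace ℝ (Fin n)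

variable {n : ℕ}

/-- Price effect `ṗ = −(I − D)⁻¹ σ`. -/
def pDot (D : Matrix (Fin n) (Fin n) ℝ) (σ : Vec n) : Vec n :=
  -(Matrix.toEuclideanLin (1 - D)⁻¹ σ)

/-- Quantity effect `q̇ = D ṗ`. -/
def qDot (D : Matrix (Fin n) (Fin n) ℝ) (σ : Vec n) : Vec n :=
  Matrix.toEuclideanLin D (pDot D σ)

/-- Expenditure derivative `Ṡ = σ·q⁰`. -/
def SDot (q σ : Vec n) : ℝ := inner ℝ σ q

/-- Consumer surplus derivative `Ċ = −q⁰·ṗ`. -/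
def CDot (D : Matrix (Fin n) (Fin n) ℝ) (q σ : Vec n) : ℝ := -(inner ℝ q (pDot D σ) : ℝ)

/-- Producer surplus derivative `Ṗ = 2 q⁰·q̇`. -/
def PDot (D : Matrix (Fin n) (Fin n) ℝ) (q σ : Vec n) : ℝ := 2 * (inner ℝ q (qDot D σ) : ℝ)

/-- Total surplus derivative `Ẇ = Ċ + Ṗ − Ṡ`. -/
def WDot (D : Matrix (Fin n) (Fin n) ℝ) (q σ : Vec n) : ℝ :=
  CDot D q σ + PDot D q σ - SDot q σ

/-- A normalized Slutsky matrix: symmetric, negative semidefinite, diagonal entries `−1`. -/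
def IsSlutsky (D : Matrix (Fin n) (Fin n) ℝ) : Prop :=
  D.IsSymm ∧ (-D).PosSemidef ∧ ∀ i, D i i = -1

/-! An eigenvector `u^ℓ` of `D` is an eigenvector of `(I - D)⁻¹` with eigenvalue
`1 / (1 - λ_ℓ) = 1 / (1 + |λ_ℓ|)`. Both operators are symmetric, so pairing `u^ℓ` with their
image of any vector `x` just multiplies `u^ℓ · x` by the eigenvalue. -/

theorem LinearMap.IsSymmetric.inner_apply_eq_of_apply_eq_smul {E : Type*}
    [NormedAddCommGroup E] [InnerProductSpace ℝ E] {T : E →ₗ[ℝ] E} (hT : T.IsSymmetric)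
    {v : E} {μ : ℝ} (hv : T v = μ • v) (x : E) :
    inner ℝ v (T x) = μ * inner ℝ v x := by
  rw [← hT, hv, real_inner_smul_left]

theorem Matrix.PosSemidef.posDef_one_add {ι : Type*} [Fintype ι] [DecidableEq ι]
    {A : Matrix ι ι ℝ} (hA : A.PosSemidef) : (1 + A).PosDef :=
  Matrix.PosDef.one.add_posSemidef hA

section Eigenvector

variable {ι : Type*} [Fintype ι] [DecidableEq ι] {A : Matrix ι ι ℝ} {v : EuclideanSpace ℝ ι}
  {μ : ℝ}

theorem Matrix.toEuclideanLin_one_sub_apply_of_apply_eq_smul (hv : toEuclideanLin A v = μ • v) :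
    toEuclideanLin (1 - A) v = (1 - μ) • v := by
  rw [map_sub, LinearMap.sub_apply, toLpLin_one, LinearMap.id_apply, hv, sub_smul, one_smul]

theorem Matrix.toEuclideanLin_nonsing_inv_apply_of_apply_eq_smul (hA : IsUnit A) (hμ : μ ≠ 0)
    (hv : toEuclideanLin A v = μ • v) :
    toEuclideanLin A⁻¹ v = μ⁻¹ • v := by
  have hAA : A⁻¹ * A = 1 := nonsing_inv_mul A ((isUnit_iff_isUnit_det A).1 hA)
  calc toEuclideanLin A⁻¹ v = μ⁻¹ • toEuclideanLin A⁻¹ (toEuclideanLin A v) := by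
        rw [hv, map_smul, smul_smul, inv_mul_cancel₀ hμ, one_smul]
    _ = μ⁻¹ • v := by
        rw [← LinearMap.comp_apply, ← toLpLin_mul, hAA, toLpLin_one, LinearMap.id_apply]

end Eigenvector

section PassThrough

variable {D : Matrix (Fin n) (Fin n) ℝ} {v : Vec n} {μ : ℝ}

theorem inner_pDot_of_apply_eq_smul (hD : (-D).PosSemidef) (hμ : μ ≠ 1)
    (hv : toEuclideanLin D v = μ • v) (σ : Vec n) :
    inner ℝ v (pDot D σ) = -(1 - μ)⁻¹ * inner ℝ v σ := by
  have hPD : (1 - D).PosDef := sub_eq_add_neg (1 : Matrix _ _ ℝ) D ▸ hD.posDef_one_add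
  have hinv := toEuclideanLin_nonsing_inv_apply_of_apply_eq_smul hPD.isUnit
    (sub_ne_zero.2 hμ.symm) (toEuclideanLin_one_sub_apply_of_apply_eq_smul hv)
  have hsymm : (toEuclideanLin (1 - D)⁻¹).IsSymmetric :=
    isSymmetric_toEuclideanLin_iff.2 hPD.isHermitian.inv
  rw [pDot, inner_neg_right, hsymm.inner_apply_eq_of_apply_eq_smul hinv, neg_mul]

theorem inner_qDot_of_apply_eq_smul (hD : D.IsHermitian) (hv : toEuclideanLin D v = μ • v)
    (σ : Vec n) :
    inner ℝ v (qDot D σ) = μ * inner ℝ v (pDot D σ) :=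
  (isSymmetric_toEuclideanLin_iff.2 hD).inner_apply_eq_of_apply_eq_smul hv _

end PassThrough

theorem stmt2_general (n : ℕ) (D : Matrix (Fin n) (Fin n) ℝ) (hD : IsSlutsky D)
    (u : Fin n → Vec n) (lam : Fin n → ℝ)
    (heig : ∀ ℓ, Matrix.toEuclideanLin D (u ℓ) = lam ℓ • u ℓ)
    (hneg : ∀ ℓ, lam ℓ ≤ 0) :
    ∀ (σ : Vec n) (ℓ : Fin n),
      (inner ℝ (u ℓ) (pDot D σ) : ℝ) = -(1 / (1 + |lam ℓ|)) * (inner ℝ (u ℓ) σ : ℝ) ∧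
      (inner ℝ (u ℓ) (qDot D σ) : ℝ) = lam ℓ * (inner ℝ (u ℓ) (pDot D σ) : ℝ) ∧
      (inner ℝ (u ℓ) (qDot D σ) : ℝ) = (|lam ℓ| / (1 + |lam ℓ|)) * (inner ℝ (u ℓ) σ : ℝ) := by
  intro σ ℓ
  obtain ⟨hsymm, hnegsemidef, -⟩ := hD
  have hp := inner_pDot_of_apply_eq_smul hnegsemidef (by linarith [hneg ℓ]) (heig ℓ) σ
  have hq := inner_qDot_of_apply_eq_smul (isHermitian_iff_isSymm.2 hsymm) (heig ℓ) σ
  rw [abs_of_nonpos (hneg ℓ), one_div, ← sub_eq_add_neg]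
  refine ⟨hp, hq, ?_⟩
  rw [hq, hp]
  ring

/-- pass-through of an intervention to the price and quantity of each
eigenvector bundle:  u^l.pdot = -(1/(1+|lam_l|)) (u^l.sigma)  and
u^l.qdot = lam_l (u^l.pdot) = (|lam_l|/(1+|lam_l|)) (u^l.sigma). -/
theorem stmt2 (n : ℕ) (hn : 1 ≤ n) (D : Matrix (Fin n) (Fin n) ℝ) (hD : IsSlutsky D)
    (u : Fin n → Vec n) (lam : Fin n → ℝ)
    (hu : Orthonormal ℝ u)
    (hspan : Submodule.span ℝ (Set.range u) = ⊤)
    (heig : ∀ ℓ, Matrix.toEuclideanLin D (u ℓ) = lam ℓ • u ℓ)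
    (hneg : ∀ ℓ, lam ℓ ≤ 0) :
    ∀ (σ : Vec n) (ℓ : Fin n),
      (inner ℝ (u ℓ) (pDot D σ) : ℝ) = -(1 / (1 + |lam ℓ|)) * (inner ℝ (u ℓ) σ : ℝ) ∧
      (inner ℝ (u ℓ) (qDot D σ) : ℝ) = lam ℓ * (inner ℝ (u ℓ) (pDot D σ) : ℝ) ∧
      (inner ℝ (u ℓ) (qDot D σ) : ℝ) = (|lam ℓ| / (1 + |lam ℓ|)) * (inner ℝ (u ℓ) σ : ℝ) :=
  stmt2_general n D hD u lam heig hneg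
end
end

section
/- For every intervention σ, expressed directly in terms of σ the surplus derivatives satisfy: Ṡ = Σ_{ℓ=1}^n (u^ℓ·q⁰)(u^ℓ·σ), Ċ = Σ_{ℓ=1}^n (1/(1 + |λ_ℓ|))·(u^ℓ·q⁰)(u^ℓ·σ), and Ẇ = Σ_{ℓ=1}^n (|λ_ℓ|/(1 + |λ_ℓ|))·(u^ℓ·q⁰)(u^ℓ·σ). -/
noncomputable section
open Matrix MeasureTheory Filter

variable {n : ℕ}

/-! In an orthonormal eigenbasis `u` of `D`, the resolvent `(1 - D)⁻¹` acts on `u ℓ` as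
`1 / (1 + |λ_ℓ|)` and `D (1 - D)⁻¹` as `-|λ_ℓ| / (1 + |λ_ℓ|)`, so `Ṡ`, `Ċ` and `Ṗ` are bilinear
forms in `(q, σ)` that are diagonal in this basis. The coefficient of `Ẇ` is then
`1 / (1 + |λ|) + 2 |λ| / (1 + |λ|) - 1 = |λ| / (1 + |λ|)`. -/

open scoped InnerProductSpace

theorem Matrix.toEuclideanLin_one_sub_apply {𝕜 ι : Type*} [RCLike 𝕜] [Fintype ι] [DecidableEq ι]
    {A : Matrix ι ι 𝕜} {v : EuclideanSpace 𝕜 ι} {μ : 𝕜} (h : toEuclideanLin A v = μ • v) :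
    toEuclideanLin (1 - A) v = (1 - μ) • v := by
  simp [h, sub_smul]

theorem Matrix.toEuclideanLin_inv_apply_of_eq_smul {𝕜 ι : Type*} [RCLike 𝕜] [Fintype ι]
    [DecidableEq ι] {A : Matrix ι ι 𝕜} (hA : IsUnit A) {v : EuclideanSpace 𝕜 ι} {μ : 𝕜}
    (h : toEuclideanLin A v = μ • v) :
    toEuclideanLin A⁻¹ v = μ⁻¹ • v := by
  have hv : μ • toEuclideanLin A⁻¹ v = v := by
    rw [← map_smul, ← h, ← LinearMap.comp_apply, ← toLpLin_mul_same,
      nonsing_inv_mul _ (A.isUnit_iff_isUnit_det.mp hA), toLpLin_one, LinearMap.id_apply]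
  rcases eq_or_ne μ 0 with rfl | hμ
  · rw [← hv]
    simp
  · conv_rhs => rw [← hv]
    rw [smul_smul, inv_mul_cancel₀ hμ, one_smul]

theorem OrthonormalBasis.inner_apply_eq_sum_of_eigen {ι E : Type*} [Fintype ι]
    [NormedAddCommGroup E] [InnerProductSpace ℝ E] (b : OrthonormalBasis ι ℝ E)
    {T : E →ₗ[ℝ] E} {μ : ι → ℝ} (hT : ∀ i, T (b i) = μ i • b i) (x y : E) :
    ⟪x, T y⟫_ℝ = ∑ i, μ i * (⟪b i, x⟫_ℝ * ⟪b i, y⟫_ℝ) := by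
  conv_lhs => rw [← b.sum_repr' y]
  simp only [map_sum, map_smul, hT, smul_smul, inner_sum, real_inner_smul_right]
  refine Finset.sum_congr rfl fun i _ => ?_
  rw [real_inner_comm x (b i)]
  ring

theorem stmt4_general (n : ℕ) (D : Matrix (Fin n) (Fin n) ℝ) (hD : IsSlutsky D)
    (q : Vec n)
    (u : Fin n → Vec n) (lam : Fin n → ℝ)
    (hu : Orthonormal ℝ u)
    (hspan : Submodule.span ℝ (Set.range u) = ⊤)
    (heig : ∀ ℓ, Matrix.toEuclideanLin D (u ℓ) = lam ℓ • u ℓ)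
    (hneg : ∀ ℓ, lam ℓ ≤ 0) :
    ∀ σ : Vec n,
      SDot q σ = ∑ ℓ : Fin n, (inner ℝ (u ℓ) q : ℝ) * (inner ℝ (u ℓ) σ : ℝ) ∧
      CDot D q σ =
        ∑ ℓ : Fin n, (1 / (1 + |lam ℓ|)) * ((inner ℝ (u ℓ) q : ℝ) * (inner ℝ (u ℓ) σ : ℝ)) ∧
      WDot D q σ =
        ∑ ℓ : Fin n, (|lam ℓ| / (1 + |lam ℓ|)) * ((inner ℝ (u ℓ) q : ℝ) * (inner ℝ (u ℓ) σ : ℝ)) := by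
  intro σ
  obtain ⟨b, rfl⟩ : ∃ b : OrthonormalBasis (Fin n) ℝ (Vec n), ⇑b = u :=
    ⟨_, OrthonormalBasis.coe_mk hu hspan.ge⟩
  have hunit : IsUnit (1 - D) := by
    rw [sub_eq_add_neg]
    exact (PosDef.one.add_posSemidef hD.2.1).isUnit
  have hlam : ∀ ℓ, lam ℓ = -|lam ℓ| := fun ℓ => by rw [abs_of_nonpos (hneg ℓ), neg_neg]
  have hresolvent : ∀ ℓ, toEuclideanLin (1 - D)⁻¹ (b ℓ) = (1 + |lam ℓ|)⁻¹ • b ℓ := fun ℓ => by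
    rw [← sub_neg_eq_add, ← hlam]
    exact toEuclideanLin_inv_apply_of_eq_smul hunit (toEuclideanLin_one_sub_apply (heig ℓ))
  have hS : SDot q σ = ∑ ℓ, ⟪b ℓ, q⟫_ℝ * ⟪b ℓ, σ⟫_ℝ := by
    simpa only [SDot, real_inner_comm q] using (b.sum_inner_mul_inner q σ).symm
  have hC : CDot D q σ = ∑ ℓ, (1 + |lam ℓ|)⁻¹ * (⟪b ℓ, q⟫_ℝ * ⟪b ℓ, σ⟫_ℝ) := by
    rw [CDot, pDot, inner_neg_right, neg_neg]
    exact b.inner_apply_eq_sum_of_eigen hresolvent q σ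
  have hP : PDot D q σ = -2 * ∑ ℓ, (lam ℓ * (1 + |lam ℓ|)⁻¹) * (⟪b ℓ, q⟫_ℝ * ⟪b ℓ, σ⟫_ℝ) := by
    rw [PDot, qDot, pDot, map_neg, inner_neg_right, ← LinearMap.comp_apply,
      b.inner_apply_eq_sum_of_eigen (fun ℓ => by
        rw [LinearMap.comp_apply, hresolvent, map_smul, heig, smul_smul, mul_comm]) q σ]
    ring
  refine ⟨hS, by simpa only [one_div] using hC, ?_⟩
  rw [WDot, hS, hC, hP, Finset.mul_sum, ← Finset.sum_add_distrib, ← Finset.sum_sub_distrib]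
  refine Finset.sum_congr rfl fun ℓ _ => ?_
  have hpos : 0 < 1 + |lam ℓ| := by positivity
  rw [hlam ℓ, abs_neg, abs_abs]
  field_simp
  ring

/-- spectral decomposition of the surplus derivatives directly in terms
of the intervention. -/
theorem stmt4 (n : ℕ) (hn : 1 ≤ n) (D : Matrix (Fin n) (Fin n) ℝ) (hD : IsSlutsky D)
    (q : Vec n) (hq : ‖q‖ ≤ 1)
    (u : Fin n → Vec n) (lam : Fin n → ℝ)
    (hu : Orthonormal ℝ u)
    (hspan : Submodule.span ℝ (Set.range u) = ⊤)
    (heig : ∀ ℓ, Matrix.toEuclideanLin D (u ℓ) = lam ℓ • u ℓ)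
    (hneg : ∀ ℓ, lam ℓ ≤ 0) :
    ∀ σ : Vec n,
      SDot q σ = ∑ ℓ : Fin n, (inner ℝ (u ℓ) q : ℝ) * (inner ℝ (u ℓ) σ : ℝ) ∧
      CDot D q σ =
        ∑ ℓ : Fin n, (1 / (1 + |lam ℓ|)) * ((inner ℝ (u ℓ) q : ℝ) * (inner ℝ (u ℓ) σ : ℝ)) ∧
      WDot D q σ =
        ∑ ℓ : Fin n, (|lam ℓ| / (1 + |lam ℓ|)) * ((inner ℝ (u ℓ) q : ℝ) * (inner ℝ (u ℓ) σ : ℝ)) :=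
  stmt4_general n D hD q u lam hu hspan heig hneg
end
end

section
/- For the intervention σ = u¹ (the first eigenvector of D), the price and quantity of the bundle u¹ change by u¹·ṗ = −1/(1 + |λ₁|) and u¹·q̇ = |λ₁|/(1 + |λ₁|), and the surplus derivatives satisfy Ċ = Ṡ/(1 + |λ₁|) and Ṗ = 2·(|λ₁|/(1 + |λ₁|))·Ṡ, where Ṡ = u¹·q⁰. -/
/-!
Since `D u¹ = λ₁ u¹`, the vector `u¹` is an eigenvector of `I − D` with eigenvalue
`1 − λ₁ = 1 + |λ₁| > 0`, hence of `(I − D)⁻¹` with eigenvalue `1 / (1 + |λ₁|)`. So `ṗ` and `q̇`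
are explicit multiples of `u¹`, and each quantity is an inner product with the unit vector `u¹`.
-/

noncomputable section
open Matrix MeasureTheory Filter

variable {n : ℕ}

theorem Matrix.toEuclideanLin_inv_apply_of_apply_eq_smul {𝕜 ι : Type*} [RCLike 𝕜] [Fintype ι]
    [DecidableEq ι] {A : Matrix ι ι 𝕜} (hA : IsUnit A.det) {v : EuclideanSpace 𝕜 ι} {μ : 𝕜}
    (hμ : μ ≠ 0) (hv : toEuclideanLin A v = μ • v) : toEuclideanLin A⁻¹ v = μ⁻¹ • v := by
  have hinv : toEuclideanLin A⁻¹ (toEuclideanLin A v) = v := by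
    rw [← LinearMap.comp_apply, ← toLpLin_mul, nonsing_inv_mul _ hA, toLpLin_one, LinearMap.id_apply]
  rw [hv, map_smul] at hinv
  calc toEuclideanLin A⁻¹ v = μ⁻¹ • μ • toEuclideanLin A⁻¹ v := by rw [inv_smul_smul₀ hμ]
    _ = μ⁻¹ • v := by rw [hinv]

theorem IsSlutsky.posDef_one_sub {D : Matrix (Fin n) (Fin n) ℝ} (hD : IsSlutsky D) :
    (1 - D).PosDef := by
  simpa [sub_eq_add_neg] using PosDef.one.add_posSemidef hD.2.1

theorem pDot_eq_smul_of_eigen {D : Matrix (Fin n) (Fin n) ℝ} (hD : IsSlutsky D) {v : Vec n}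
    {l : ℝ} (hl : l ≤ 0) (hv : toEuclideanLin D v = l • v) :
    pDot D v = -(1 / (1 + |l|)) • v := by
  have hsub : toEuclideanLin (1 - D) v = (1 + |l|) • v := by
    rw [map_sub, LinearMap.sub_apply, toLpLin_one, LinearMap.id_apply, hv, abs_of_nonpos hl]
    module
  have hpos : (1 + |l|) ≠ 0 := by positivity
  rw [pDot, toEuclideanLin_inv_apply_of_apply_eq_smul hD.posDef_one_sub.det_pos.ne'.isUnit hpos hsub,
    one_div, neg_smul]

theorem qDot_eq_smul_of_eigen {D : Matrix (Fin n) (Fin n) ℝ} (hD : IsSlutsky D) {v : Vec n}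
    {l : ℝ} (hl : l ≤ 0) (hv : toEuclideanLin D v = l • v) :
    qDot D v = (|l| / (1 + |l|)) • v := by
  rw [qDot, pDot_eq_smul_of_eigen hD hl hv, map_smul, hv, smul_smul, abs_of_nonpos hl]
  congr 1
  ring

theorem stmt5_general (n : ℕ) (D : Matrix (Fin n) (Fin n) ℝ) (hD : IsSlutsky D)
    (q : Vec n)
    (u : Fin n → Vec n) (lam : Fin n → ℝ)
    (hu : Orthonormal ℝ u)
    (heig : ∀ ℓ, Matrix.toEuclideanLin D (u ℓ) = lam ℓ • u ℓ)
    (hneg : ∀ ℓ, lam ℓ ≤ 0)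
    (h1 : 0 < n) :
    (inner ℝ (u ⟨0, h1⟩) (pDot D (u ⟨0, h1⟩)) : ℝ) = -(1 / (1 + |lam ⟨0, h1⟩|)) ∧
    (inner ℝ (u ⟨0, h1⟩) (qDot D (u ⟨0, h1⟩)) : ℝ) = |lam ⟨0, h1⟩| / (1 + |lam ⟨0, h1⟩|) ∧
    SDot q (u ⟨0, h1⟩) = (inner ℝ (u ⟨0, h1⟩) q : ℝ) ∧
    CDot D q (u ⟨0, h1⟩) = SDot q (u ⟨0, h1⟩) / (1 + |lam ⟨0, h1⟩|) ∧
    PDot D q (u ⟨0, h1⟩) = 2 * (|lam ⟨0, h1⟩| / (1 + |lam ⟨0, h1⟩|)) * SDot q (u ⟨0, h1⟩) := by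
  set i : Fin n := ⟨0, h1⟩
  have hpDot := pDot_eq_smul_of_eigen hD (hneg i) (heig i)
  have hqDot := qDot_eq_smul_of_eigen hD (hneg i) (heig i)
  have hunit : inner ℝ (u i) (u i) = (1 : ℝ) := inner_self_eq_one_of_norm_eq_one (hu.1 i)
  refine ⟨?_, ?_, rfl, ?_, ?_⟩
  · rw [hpDot, real_inner_smul_right, hunit, mul_one]
  · rw [hqDot, real_inner_smul_right, hunit, mul_one]
  · rw [CDot, SDot, hpDot, real_inner_smul_right, real_inner_comm]
    ring
  · rw [PDot, SDot, hqDot, real_inner_smul_right, real_inner_comm]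
    ring

/-- the first-eigenvector intervention: price and quantity of the bundle
u^1 change by -1/(1+|lam_1|) and |lam_1|/(1+|lam_1|), and the surplus derivatives
satisfy Cdot = Sdot/(1+|lam_1|) and Pdot = 2 (|lam_1|/(1+|lam_1|)) Sdot,
where Sdot = u^1 . q0. -/
theorem stmt5 (n : ℕ) (hn : 1 ≤ n) (D : Matrix (Fin n) (Fin n) ℝ) (hD : IsSlutsky D)
    (q : Vec n) (hq : ‖q‖ ≤ 1)
    (u : Fin n → Vec n) (lam : Fin n → ℝ)
    (hu : Orthonormal ℝ u)
    (hspan : Submodule.span ℝ (Set.range u) = ⊤)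
    (heig : ∀ ℓ, Matrix.toEuclideanLin D (u ℓ) = lam ℓ • u ℓ)
    (hneg : ∀ ℓ, lam ℓ ≤ 0)
    (horder : ∀ k ℓ : Fin n, k ≤ ℓ → |lam ℓ| ≤ |lam k|)
    (h1 : 0 < n) :
    (inner ℝ (u ⟨0, h1⟩) (pDot D (u ⟨0, h1⟩)) : ℝ) = -(1 / (1 + |lam ⟨0, h1⟩|)) ∧
    (inner ℝ (u ⟨0, h1⟩) (qDot D (u ⟨0, h1⟩)) : ℝ) = |lam ⟨0, h1⟩| / (1 + |lam ⟨0, h1⟩|) ∧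
    SDot q (u ⟨0, h1⟩) = (inner ℝ (u ⟨0, h1⟩) q : ℝ) ∧
    CDot D q (u ⟨0, h1⟩) = SDot q (u ⟨0, h1⟩) / (1 + |lam ⟨0, h1⟩|) ∧
    PDot D q (u ⟨0, h1⟩) = 2 * (|lam ⟨0, h1⟩| / (1 + |lam ⟨0, h1⟩|)) * SDot q (u ⟨0, h1⟩) :=
  stmt5_general n D hD q u lam hu heig hneg h1
end
end

section
/- Let M̲ > 0, let L̲ = L(D, M̲), and let V be any linear subspace of ℝⁿ. If the intervention σ lies in V, then for every vector q^h ∈ ℝⁿ (a household quantity vector) the household consumer surplus derivative Ċ^h = −q^h·ṗ satisfies |Ċ^h| ≤ ‖q^h‖·( ‖σ‖/(1 + M̲) + ‖P⊥_{L̲} P_V‖·‖σ‖ ). -/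
noncomputable section
open Matrix MeasureTheory Filter

variable {n : ℕ}

/-- The span of the eigenvectors of a matrix whose eigenvalues are at least `M`
in absolute value. -/
def eigSpan (A : Matrix (Fin n) (Fin n) ℝ) (M : ℝ) : Submodule ℝ (Vec n) :=
  ⨆ μ ∈ {μ : ℝ | M ≤ |μ|}, Module.End.eigenspace (Matrix.toEuclideanLin A) μ

/-- Orthogonal projection onto a subspace, as a map into the ambient space. -/
def projVec (V : Submodule ℝ (Vec n)) (x : Vec n) : Vec n :=
  (V.orthogonalProjection x : Vec n)

/-- Orthogonal projection onto a subspace, as a continuous linear endomorphism. -/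
def projCLM (V : Submodule ℝ (Vec n)) : Vec n →L[ℝ] Vec n :=
  V.subtypeL.comp (V.orthogonalProjection)

/-- Spectral (operator) norm of a matrix. -/
def specNorm (A : Matrix (Fin n) (Fin n) ℝ) : ℝ :=
  ‖LinearMap.toContinuousLinearMap (Matrix.toEuclideanLin A)‖

/-!
Write `ṗ = -y` with `y - D y = σ`. As `D ≤ 0`, `‖y‖² ≤ ⟪y, y - D y⟫ ≤ ‖y‖ ‖σ‖`, so `‖y‖ ≤ ‖σ‖`.
In an orthonormal eigenbasis of `D` the coordinates of `y` are those of `σ` divided by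
`1 - μᵢ = 1 + |μᵢ|`, and for `σ ∈ L(D, M)` only eigenvalues with `|μᵢ| ≥ M` contribute, which
improves the bound to `‖σ‖ / (1 + M)`. Since `σ ∈ V`, `σ = P_L σ + P_L^⊥ P_V σ`; applying the
two bounds to the two pieces and Cauchy–Schwarz to `q^h · y` gives the claim.
-/

open scoped InnerProductSpace

section NonposOperator

variable {E : Type*} [NormedAddCommGroup E] [InnerProductSpace ℝ E] {T : E →ₗ[ℝ] E}

theorem norm_le_norm_sub_apply_of_inner_apply_self_nonpos (hT_nonpos : ∀ y, ⟪T y, y⟫_ℝ ≤ 0)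
    (y : E) : ‖y‖ ≤ ‖y - T y‖ := by
  have h : ‖y‖ * ‖y‖ ≤ ‖y‖ * ‖y - T y‖ :=
    calc ‖y‖ * ‖y‖ ≤ ⟪y, y - T y⟫_ℝ := by
          rw [inner_sub_right, real_inner_self_eq_norm_mul_norm, real_inner_comm]
          linarith [hT_nonpos y]
      _ ≤ ‖y‖ * ‖y - T y‖ := real_inner_le_norm _ _
  rcases (norm_nonneg y).eq_or_lt with hy | hy
  · rw [← hy]
    exact norm_nonneg _
  · exact le_of_mul_le_mul_left h hy

theorem OrthonormalBasis.norm_le_mul_norm_of_abs_inner_le {ι : Type*} [Fintype ι]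
    (b : OrthonormalBasis ι ℝ E) {x y : E} {c : ℝ} (hc : 0 ≤ c)
    (h : ∀ i, |⟪b i, y⟫_ℝ| ≤ c * |⟪b i, x⟫_ℝ|) : ‖y‖ ≤ c * ‖x‖ := by
  rw [← sq_le_sq₀ (norm_nonneg _) (by positivity), mul_pow, ← b.sum_sq_inner_right,
    ← b.sum_sq_inner_right, Finset.mul_sum]
  refine Finset.sum_le_sum fun i _ => ?_
  simpa only [sq_abs, mul_pow] using pow_le_pow_left₀ (abs_nonneg _) (h i) 2

namespace LinearMap.IsSymmetric

theorem eigenspace_isOrtho_iSup_eigenspace (hT : T.IsSymmetric) {ν : ℝ} {S : Set ℝ}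
    (hν : ν ∉ S) : Module.End.eigenspace T ν ⟂ ⨆ μ ∈ S, Module.End.eigenspace T μ :=
  Submodule.isOrtho_iSup_right.2 fun _ => Submodule.isOrtho_iSup_right.2 fun hμ =>
    hT.orthogonalFamily_eigenspaces.isOrtho (ne_of_mem_of_not_mem hμ hν).symm

variable [FiniteDimensional ℝ E]

theorem eigenvalues_nonpos {n : ℕ} (hT : T.IsSymmetric) (hn : Module.finrank ℝ E = n)
    (hT_nonpos : ∀ y, ⟪T y, y⟫_ℝ ≤ 0) (i : Fin n) :
    hT.eigenvalues hn i ≤ 0 := by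
  simpa [real_inner_smul_left] using hT_nonpos (hT.eigenvectorBasis hn i)

theorem inner_eigenvectorBasis_sub_apply {n : ℕ} (hT : T.IsSymmetric)
    (hn : Module.finrank ℝ E = n) (y : E) (i : Fin n) :
    ⟪hT.eigenvectorBasis hn i, y - T y⟫_ℝ =
      (1 - hT.eigenvalues hn i) * ⟪hT.eigenvectorBasis hn i, y⟫_ℝ := by
  rw [inner_sub_right, ← hT, apply_eigenvectorBasis, real_inner_smul_left,
    RCLike.ofReal_real_eq_id, id_eq]
  ring

theorem norm_le_inv_one_add_mul_norm_sub_apply (hT : T.IsSymmetric)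
    (hT_nonpos : ∀ y, ⟪T y, y⟫_ℝ ≤ 0) {M : ℝ} (hM : 0 ≤ M) {y : E}
    (hy : y - T y ∈ ⨆ μ ∈ {μ : ℝ | M ≤ |μ|}, Module.End.eigenspace T μ) :
    ‖y‖ ≤ (1 + M)⁻¹ * ‖y - T y‖ := by
  refine (hT.eigenvectorBasis rfl).norm_le_mul_norm_of_abs_inner_le (by positivity) fun i => ?_
  have hμ := hT.eigenvalues_nonpos rfl hT_nonpos i
  by_cases hi : M ≤ |hT.eigenvalues rfl i|
  · rw [abs_of_nonpos hμ] at hi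
    rw [hT.inner_eigenvectorBasis_sub_apply, abs_mul,
      abs_of_pos (a := 1 - hT.eigenvalues rfl i) (by linarith), le_inv_mul_iff₀ (by linarith)]
    exact mul_le_mul_of_nonneg_right (by linarith) (abs_nonneg _)
  · have h0 := (hT.eigenspace_isOrtho_iSup_eigenspace (S := {μ : ℝ | M ≤ |μ|}) hi).inner_eq
      (hT.hasEigenvector_eigenvectorBasis rfl i).1 hy
    rw [hT.inner_eigenvectorBasis_sub_apply, mul_eq_zero] at h0
    rw [h0.resolve_left (by linarith), abs_zero]
    positivity

theorem norm_le_div_one_add_add_norm_sub_starProjection (hT : T.IsSymmetric) (hT_nonpos : ∀ y, ⟪T y, y⟫_ℝ ≤ 0) {M : ℝ}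
    (hM : 0 ≤ M) {R : E →ₗ[ℝ] E} (hR : ∀ x, R x - T (R x) = x) (x : E) :
    ‖R x‖ ≤ ‖x‖ / (1 + M) +
      ‖x - (⨆ μ ∈ {μ : ℝ | M ≤ |μ|}, Module.End.eigenspace T μ).starProjection x‖ := by
  set L := ⨆ μ ∈ {μ : ℝ | M ≤ |μ|}, Module.End.eigenspace T μ
  set p := L.starProjection x
  have hRp : ‖R p‖ ≤ (1 + M)⁻¹ * ‖p‖ := by
    simpa only [hR] using hT.norm_le_inv_one_add_mul_norm_sub_apply hT_nonpos hM (y := R p)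
      (by simpa only [hR] using L.starProjection_apply_mem x)
  calc ‖R x‖ = ‖R p + R (x - p)‖ := by rw [← map_add, add_sub_cancel]
    _ ≤ ‖R p‖ + ‖R (x - p)‖ := norm_add_le _ _
    _ ≤ (1 + M)⁻¹ * ‖p‖ + ‖x - p‖ := by
      gcongr
      simpa only [hR] using norm_le_norm_sub_apply_of_inner_apply_self_nonpos hT_nonpos (R (x - p))
    _ ≤ ‖x‖ / (1 + M) + ‖x - p‖ := by
      rw [div_eq_inv_mul]
      gcongr
      exact L.norm_starProjection_apply_le x

end LinearMap.IsSymmetric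

end NonposOperator

namespace Matrix

variable {ι : Type*} [Fintype ι] [DecidableEq ι] {D : Matrix ι ι ℝ}

theorem isSymmetric_toEuclideanLin_of_posSemidef_neg (hD : (-D).PosSemidef) :
    (toEuclideanLin D).IsSymmetric :=
  isSymmetric_toEuclideanLin_iff.2 (by simpa using hD.isHermitian.neg)

theorem inner_toEuclideanLin_self_nonpos_of_posSemidef_neg (hD : (-D).PosSemidef)
    (y : EuclideanSpace ℝ ι) : ⟪toEuclideanLin D y, y⟫_ℝ ≤ 0 := by
  have := hD.dotProduct_mulVec_nonneg y.ofLp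
  simp only [neg_mulVec, dotProduct_neg, star_trivial] at this
  simp [EuclideanSpace.inner_eq_star_dotProduct, toLpLin_apply]
  linarith

theorem toEuclideanLin_one_sub_inv_sub_apply (hD : (-D).PosSemidef) (x : EuclideanSpace ℝ ι) :
    toEuclideanLin (1 - D)⁻¹ x - toEuclideanLin D (toEuclideanLin (1 - D)⁻¹ x) = x := by
  have hunit : IsUnit (1 - D).det := by
    simpa [sub_eq_add_neg] using (PosDef.one.add_posSemidef hD).isUnit.map detMonoidHom
  have h : (1 - D) *ᵥ ((1 - D)⁻¹ *ᵥ x.ofLp) = x.ofLp := by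
    rw [mulVec_mulVec, mul_nonsing_inv _ hunit, one_mulVec]
  rw [sub_mulVec, one_mulVec] at h
  ext i
  simpa [toLpLin_apply] using congrFun h i

end Matrix

theorem stmt7_general (n : ℕ) (D : Matrix (Fin n) (Fin n) ℝ) (hD : IsSlutsky D)
    (Mlow : ℝ) (hM : 0 < Mlow) (V : Submodule ℝ (Vec n)) (σ : Vec n) (hσ : σ ∈ V) :
    ∀ qh : Vec n,
      |-(inner ℝ qh (pDot D σ) : ℝ)| ≤
        ‖qh‖ * (‖σ‖ / (1 + Mlow) +
          ‖((1 : Vec n →L[ℝ] Vec n) - projCLM (eigSpan D Mlow)).comp (projCLM V)‖ * ‖σ‖) := by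
  intro qh
  obtain ⟨-, hD_nonpos, -⟩ := hD
  have hT := isSymmetric_toEuclideanLin_of_posSemidef_neg hD_nonpos
  set P := ((1 : Vec n →L[ℝ] Vec n) - projCLM (eigSpan D Mlow)).comp (projCLM V)
  have hP : P σ = σ - (eigSpan D Mlow).starProjection σ := by
    simp [P, projCLM, Submodule.starProjection_eq_self_iff.2 hσ]
  calc |-⟪qh, pDot D σ⟫_ℝ| = |⟪qh, toEuclideanLin (1 - D)⁻¹ σ⟫_ℝ| := by
        rw [pDot, inner_neg_right, neg_neg]
    _ ≤ ‖qh‖ * ‖toEuclideanLin (1 - D)⁻¹ σ‖ := abs_real_inner_le_norm _ _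
    _ ≤ ‖qh‖ * (‖σ‖ / (1 + Mlow) + ‖P σ‖) := by
      rw [hP]
      gcongr
      exact hT.norm_le_div_one_add_add_norm_sub_starProjection
        (inner_toEuclideanLin_self_nonpos_of_posSemidef_neg hD_nonpos) hM.le
        (toEuclideanLin_one_sub_inv_sub_apply hD_nonpos) σ
    _ ≤ ‖qh‖ * (‖σ‖ / (1 + Mlow) + ‖P‖ * ‖σ‖) := by
      gcongr
      exact P.le_opNorm σ

/-- if the intervention lies in a subspace V, then every household
consumer-surplus derivative is bounded by
norm(qh) * ( norm(sigma)/(1+M) + opnorm(Pperp_L P_V) * norm(sigma) ). -/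
theorem stmt7 (n : ℕ) (hn : 1 ≤ n) (D : Matrix (Fin n) (Fin n) ℝ) (hD : IsSlutsky D)
    (Mlow : ℝ) (hM : 0 < Mlow) (V : Submodule ℝ (Vec n)) (σ : Vec n) (hσ : σ ∈ V) :
    ∀ qh : Vec n,
      |-(inner ℝ qh (pDot D σ) : ℝ)| ≤
        ‖qh‖ * (‖σ‖ / (1 + Mlow) +
          ‖((1 : Vec n →L[ℝ] Vec n) - projCLM (eigSpan D Mlow)).comp (projCLM V)‖ * ‖σ‖) :=
  stmt7_general n D hD Mlow hM V σ hσ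
end
end
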